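/- Under the CMES sampling setup, the expected welfare of the conditional multinomial empirical success rule satisfies U_{M*} − Σ_{k=1}^{m} exp(−2·Δ_{M*k}² / {Σ_{l=1}^{L} p_l²·(A_{kl} + A_{M*l})})·Δ_{M*k} ≤ u ≤ U_{M*}. -/

import Mathlib

open MeasureTheory ProbabilityTheory Finset

/-!
Under the no-ties assumption the events "arm `k` is the strict argmax of `Û`" partition `Ω` up to
a null set, so `U_{M*} - u = ∑_k P(k wins) Δ_{M*k} ≥ 0`, and `P(k wins) ≤ P(Û_{M*} < Û_k)`.
Now `(Û_k - U_k) - (Û_{M*} - U_{M*})` is a difference of weighted sums of independent centred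
`[0,1]`-valued samples over disjoint index sets, whose squared weights add up to
`∑_l p_l² (A_{kl} + A_{M*l})`; Hoeffding's inequality bounds the probability that it exceeds
`Δ_{M*k}` by `exp (-2 Δ_{M*k}² / ∑_l p_l² (A_{kl} + A_{M*l}))`.
-/

section Hoeffding

variable {Ω ι : Type*} [MeasurableSpace Ω] {P : Measure Ω} {X : ι → Ω → ℝ}

lemma hasSubgaussianMGF_sum_mul_sub_integral_of_mem_Icc (hindep : iIndepFun X P)
    (hmeas : ∀ i, Measurable (X i)) (hX : ∀ i ω, X i ω ∈ Set.Icc (0 : ℝ) 1)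
    (a : ι → ℝ) (s : Finset ι) :
    HasSubgaussianMGF (fun ω ↦ ∑ i ∈ s, a i * (X i ω - P[X i]))
      ((∑ i ∈ s, ‖a i‖₊ ^ 2) / 4) P := by
  have := hindep.isProbabilityMeasure
  have hcentered : iIndepFun (fun i ω ↦ a i * (X i ω - P[X i])) P :=
    hindep.comp (fun i (x : ℝ) ↦ a i * (x - ∫ ω, X i ω ∂P)) (fun i ↦ by fun_prop)
  rw [Finset.sum_div]
  refine HasSubgaussianMGF.sum_of_iIndepFun hcentered fun i _ ↦ ?_
  convert (hasSubgaussianMGF_of_mem_Icc (μ := P) (hmeas i).aemeasurable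
    (ae_of_all _ (hX i))).const_mul (a i) using 1
  -- `const_mul` states its proxy on the subtype `{r // 0 ≤ r}`, invisible to `rw` as `ℝ≥0`
  refine NNReal.eq ?_
  erw [NNReal.coe_mul]
  change _ = a i ^ 2 * _
  norm_num [div_eq_mul_inv]

lemma ProbabilityTheory.iIndepFun.indepFun_sum_comp_of_disjoint (hindep : iIndepFun X P)
    (hmeas : ∀ i, Measurable (X i)) (φ : ι → ℝ → ℝ) (hφ : ∀ i, Measurable (φ i))
    {S T : Finset ι} (hST : Disjoint S T) :
    IndepFun (fun ω ↦ ∑ i ∈ S, φ i (X i ω)) (fun ω ↦ ∑ i ∈ T, φ i (X i ω)) P := by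
  have h := (hindep.indepFun_finset S T hST hmeas).comp
    (φ := fun x : S → ℝ ↦ ∑ i : S, φ i (x i)) (ψ := fun x : T → ℝ ↦ ∑ i : T, φ i (x i))
    (by fun_prop) (by fun_prop)
  convert h using 1 <;> ext ω <;> exact (Finset.sum_coe_sort _ (fun i ↦ φ i (X i ω))).symm

lemma measureReal_sum_sub_sum_ge_le_of_mem_Icc (hindep : iIndepFun X P)
    (hmeas : ∀ i, Measurable (X i)) (hX : ∀ i ω, X i ω ∈ Set.Icc (0 : ℝ) 1)
    (a : ι → ℝ) {S T : Finset ι} (hST : Disjoint S T) {ε : ℝ} (hε : 0 ≤ ε) :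
    P.real {ω | ε ≤ ∑ i ∈ S, a i * (X i ω - P[X i]) - ∑ i ∈ T, a i * (X i ω - P[X i])}
      ≤ Real.exp (-2 * ε ^ 2 / (∑ i ∈ S, a i ^ 2 + ∑ i ∈ T, a i ^ 2)) := by
  have hindep' := hindep.indepFun_sum_comp_of_disjoint hmeas (fun i x ↦ a i * (x - P[X i]))
    (fun i ↦ by fun_prop) hST
  have h := ((hasSubgaussianMGF_sum_mul_sub_integral_of_mem_Icc hindep hmeas hX a S).sub_of_indepFun
    (hasSubgaussianMGF_sum_mul_sub_integral_of_mem_Icc hindep hmeas hX a T)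
    hindep').measure_ge_le hε
  convert h using 2
  push_cast
  simp only [Real.norm_eq_abs, sq_abs]
  rw [show ∀ x y : ℝ, 2 * (x / 4 + y / 4) = (x + y) / 2 by intros; ring, div_div_eq_mul_div]
  ring

end Hoeffding

section ArgmaxWelfare

variable {Ω ι : Type*} [MeasurableSpace Ω] [Fintype ι]

noncomputable def argmaxWelfare (P : Measure Ω) (f : ι → Ω → ℝ) (U : ι → ℝ) : ℝ :=
  ∑ k, P.real {ω | ∀ j, j ≠ k → f j ω < f k ω} * U k

variable {P : Measure Ω} [IsProbabilityMeasure P] {f : ι → Ω → ℝ}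

lemma sum_measureReal_forall_lt_eq_one [Nonempty ι] (hf : ∀ i, Measurable (f i))
    (hties : ∀ i j, i ≠ j → P {ω | f i ω = f j ω} = 0) :
    ∑ k, P.real {ω | ∀ j, j ≠ k → f j ω < f k ω} = 1 := by
  set E : ι → Set Ω := fun k ↦ {ω | ∀ j, j ≠ k → f j ω < f k ω}
  have hE : ∀ k, MeasurableSet (E k) := fun k ↦ by
    simp only [E, Set.ofPred_forall]
    exact .iInter fun j ↦ .iInter fun _ ↦ measurableSet_lt (hf j) (hf k)
  have hdisj : Pairwise (Function.onFun Disjoint E) := fun j k hjk ↦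
    Set.disjoint_left.2 fun ω hj hk ↦ lt_asymm (hj k hjk.symm) (hk j hjk)
  have hcover : (⋃ k, E k)ᶜ ⊆ ⋃ i, ⋃ j, ⋃ (_ : i ≠ j), {ω | f i ω = f j ω} := by
    intro ω hω
    obtain ⟨k, hk⟩ := Finite.exists_max (f · ω)
    simp only [Set.mem_compl_iff, Set.mem_iUnion, not_exists, E, Set.mem_ofPred_eq,
      not_forall, not_lt] at hω ⊢
    obtain ⟨j, hjk, hle⟩ := hω k
    exact ⟨j, k, hjk, le_antisymm (hk j) hle⟩
  have hnull : P (⋃ k, E k)ᶜ = 0 := measure_mono_null hcover <|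
    measure_iUnion_null fun i ↦ measure_iUnion_null fun j ↦ measure_iUnion_null (hties i j)
  rw [← measureReal_iUnion_fintype hdisj hE, measureReal_def,
    (prob_compl_eq_zero_iff (.iUnion hE)).1 hnull, ENNReal.toReal_one]

lemma sub_argmaxWelfare_eq [Nonempty ι] (hf : ∀ i, Measurable (f i))
    (hties : ∀ i j, i ≠ j → P {ω | f i ω = f j ω} = 0) (U : ι → ℝ) (c : ℝ) :
    c - argmaxWelfare P f U = ∑ k, P.real {ω | ∀ j, j ≠ k → f j ω < f k ω} * (c - U k) := by
  simp only [argmaxWelfare, mul_sub, sum_sub_distrib, ← sum_mul,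
    sum_measureReal_forall_lt_eq_one hf hties, one_mul]

lemma argmaxWelfare_le (hf : ∀ i, Measurable (f i))
    (hties : ∀ i j, i ≠ j → P {ω | f i ω = f j ω} = 0) {U : ι → ℝ} {M : ι}
    (hM : ∀ k, U k ≤ U M) : argmaxWelfare P f U ≤ U M := by
  have : Nonempty ι := ⟨M⟩
  rw [← sub_nonneg, sub_argmaxWelfare_eq hf hties]
  exact sum_nonneg fun k _ ↦ mul_nonneg measureReal_nonneg (sub_nonneg.2 (hM k))

lemma sub_sum_mul_le_argmaxWelfare (hf : ∀ i, Measurable (f i))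
    (hties : ∀ i j, i ≠ j → P {ω | f i ω = f j ω} = 0) {U : ι → ℝ} {M : ι}
    (hM : ∀ k, U k ≤ U M) (B : ι → ℝ) (hB : ∀ k, k ≠ M → P.real {ω | f M ω < f k ω} ≤ B k) :
    U M - ∑ k, B k * (U M - U k) ≤ argmaxWelfare P f U := by
  have : Nonempty ι := ⟨M⟩
  rw [sub_le_comm, sub_argmaxWelfare_eq hf hties]
  refine sum_le_sum fun k _ ↦ ?_
  rcases eq_or_ne k M with rfl | hkM
  · simp
  have hmistake : {ω | ∀ j, j ≠ k → f j ω < f k ω} ⊆ {ω | f M ω < f k ω} :=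
    fun ω hω ↦ hω M hkM.symm
  exact mul_le_mul_of_nonneg_right ((measureReal_mono hmistake).trans (hB k hkM))
    (sub_nonneg.2 (hM k))

end ArgmaxWelfare

namespace CMES

variable {m L : ℕ}

def armSamples (N : Fin m → Fin 2 → Fin L → ℕ) (k : Fin m) :
    Finset (Fin m × Fin 2 × Fin L × ℕ) :=
  ((univ : Finset (Fin L × Fin 2)).sigma fun lt ↦ range (N k lt.2 lt.1)).image
    fun x ↦ (k, x.1.2, x.1.1, x.2)

lemma disjoint_armSamples (N : Fin m → Fin 2 → Fin L → ℕ) {j k : Fin m} (hjk : j ≠ k) :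
    Disjoint (armSamples N j) (armSamples N k) := by
  simp only [armSamples, disjoint_left, mem_image]
  rintro _ ⟨x, -, rfl⟩ ⟨y, -, h⟩
  exact hjk (congrArg Prod.fst h).symm

/-- `Û_k` is the `sampleWeight`-weighted sum of `Y_q` over `q ∈ armSamples N k`. -/
noncomputable def sampleWeight (p : Fin L → ℝ) (π : Fin m → Fin L → ℝ)
    (N : Fin m → Fin 2 → Fin L → ℕ) (q : Fin m × Fin 2 × Fin L × ℕ) : ℝ :=
  p q.2.2.1 * ![1 - π q.1 q.2.2.1, π q.1 q.2.2.1] q.2.1 / N q.1 q.2.1 q.2.2.1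

variable (p : Fin L → ℝ) (π : Fin m → Fin L → ℝ) (N : Fin m → Fin 2 → Fin L → ℕ)

lemma sum_armSamples_sampleWeight_mul (k : Fin m) (G : Fin m × Fin 2 × Fin L × ℕ → ℝ) :
    ∑ q ∈ armSamples N k, sampleWeight p π N q * G q
      = ∑ l, p l * ((1 - π k l) * ((N k 0 l : ℝ)⁻¹ * ∑ i ∈ range (N k 0 l), G (k, 0, l, i))
          + π k l * ((N k 1 l : ℝ)⁻¹ * ∑ i ∈ range (N k 1 l), G (k, 1, l, i))) := by
  rw [armSamples, sum_image (by rintro ⟨⟨l, t⟩, i⟩ - ⟨⟨l', t'⟩, i'⟩ - h; simp_all),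
    sum_sigma, Fintype.sum_prod_type]
  refine sum_congr rfl fun l _ ↦ ?_
  simp only [Fin.sum_univ_two, sampleWeight, Matrix.cons_val_zero, Matrix.cons_val_one,
    mul_sum, mul_add]
  congr 1 <;> exact sum_congr rfl fun i _ ↦ by ring

lemma sum_armSamples_sampleWeight_mul_const {k : Fin m} (hN : ∀ t l, N k t l ≠ 0)
    (c : Fin m → Fin 2 → Fin L → ℝ) :
    ∑ q ∈ armSamples N k, sampleWeight p π N q * c q.1 q.2.1 q.2.2.1
      = ∑ l, p l * ((1 - π k l) * c k 0 l + π k l * c k 1 l) := by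
  rw [sum_armSamples_sampleWeight_mul]
  refine sum_congr rfl fun l _ ↦ ?_
  simp [hN]

lemma sum_armSamples_sampleWeight_sq {k : Fin m} (hN : ∀ t l, N k t l ≠ 0) :
    ∑ q ∈ armSamples N k, sampleWeight p π N q ^ 2
      = ∑ l, p l ^ 2 * ((1 - π k l) ^ 2 / N k 0 l + π k l ^ 2 / N k 1 l) := by
  -- `sampleWeight` ignores the sample index `q.2.2.2`
  have hsq : ∀ q, sampleWeight p π N q ^ 2
      = sampleWeight p π N q * sampleWeight p π N (q.1, q.2.1, q.2.2.1, 0) := fun q ↦ sq _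
  rw [sum_congr rfl fun q _ ↦ hsq q, sum_armSamples_sampleWeight_mul_const p π N hN
    (fun j t l ↦ sampleWeight p π N (j, t, l, 0))]
  refine sum_congr rfl fun l _ ↦ ?_
  simp [sampleWeight]
  ring

end CMES

open CMES in
theorem cmes_expected_welfare_bounds_general
    {Ω : Type*} [MeasurableSpace Ω] (P : Measure Ω) [IsProbabilityMeasure P]
    (L : ℕ)
    (p : Fin L → ℝ)
    (m : ℕ)
    (π : Fin m → Fin L → ℝ)
    (N : Fin m → Fin 2 → Fin L → ℕ) (hN : ∀ k t l, 1 ≤ N k t l)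
    (Y : Fin m → Fin 2 → Fin L → ℕ → Ω → ℝ)
    (hmeas : ∀ k t l i, Measurable (Y k t l i))
    (hrange : ∀ k t l i ω, Y k t l i ω ∈ Set.Icc (0 : ℝ) 1)
    (μ : Fin m → Fin 2 → Fin L → ℝ)
    (hmean : ∀ k t l i, ∫ ω, Y k t l i ω ∂P = μ k t l)
    (hindep : iIndepFun
      (fun q : Fin m × Fin 2 × Fin L × ℕ => Y q.1 q.2.1 q.2.2.1 q.2.2.2) P)
    (Uhat : Fin m → Ω → ℝ)
    (hUhat : ∀ k ω, Uhat k ω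
      = ∑ l, p l *
          ((1 - π k l) * ((N k 0 l : ℝ)⁻¹ * ∑ i ∈ Finset.range (N k 0 l), Y k 0 l i ω)
            + π k l * ((N k 1 l : ℝ)⁻¹ * ∑ i ∈ Finset.range (N k 1 l), Y k 1 l i ω)))
    (U : Fin m → ℝ)
    (hU : ∀ k, U k = ∑ l, p l * ((1 - π k l) * μ k 0 l + π k l * μ k 1 l))
    (A : Fin m → Fin L → ℝ)
    (hA : ∀ k l, A k l = (1 - π k l) ^ 2 / (N k 0 l : ℝ) + (π k l) ^ 2 / (N k 1 l : ℝ))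
    (u : ℝ)
    (hu : u = ∑ k, (P {ω | ∀ j, j ≠ k → Uhat j ω < Uhat k ω}).toReal * U k)
    (hties : ∀ j k, j ≠ k → P {ω | Uhat j ω = Uhat k ω} = 0)
    (M : Fin m) (hM : ∀ k, U k ≤ U M) :
    U M - ∑ k, Real.exp (-2 * (U M - U k) ^ 2 / ∑ l, (p l) ^ 2 * (A k l + A M l))
        * (U M - U k) ≤ u
      ∧ u ≤ U M := by
  set X : Fin m × Fin 2 × Fin L × ℕ → Ω → ℝ := fun q ↦ Y q.1 q.2.1 q.2.2.1 q.2.2.2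
  have hN0 : ∀ k t l, N k t l ≠ 0 := fun k t l ↦ Nat.one_le_iff_ne_zero.1 (hN k t l)
  have hcentered : ∀ k, Uhat k = fun ω ↦
      U k + ∑ q ∈ armSamples N k, sampleWeight p π N q * (X q ω - P[X q]) := fun k ↦ by
    funext ω
    rw [hUhat k ω, hU, ← sum_armSamples_sampleWeight_mul_const p π N (hN0 k) μ]
    refine (sum_armSamples_sampleWeight_mul p π N k (X · ω)).symm.trans ?_
    simp only [X, hmean, mul_sub, sum_sub_distrib, add_sub_cancel]
  have hvar : ∀ k, ∑ q ∈ armSamples N k, sampleWeight p π N q ^ 2 = ∑ l, p l ^ 2 * A k l :=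
    fun k ↦ by simp only [sum_armSamples_sampleWeight_sq p π N (hN0 k), hA]
  have hmeasUhat : ∀ k, Measurable (Uhat k) := fun k ↦ by rw [hcentered k]; fun_prop
  rw [show u = argmaxWelfare P Uhat U from hu]
  refine ⟨sub_sum_mul_le_argmaxWelfare hmeasUhat hties hM _ fun k hkM ↦ ?_,
    argmaxWelfare_le hmeasUhat hties hM⟩
  refine (measureReal_mono fun ω hω ↦ ?_).trans
    ((measureReal_sum_sub_sum_ge_le_of_mem_Icc hindep (fun q ↦ hmeas _ _ _ _)
      (fun q ↦ hrange _ _ _ _) (sampleWeight p π N) (disjoint_armSamples N hkM)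
      (sub_nonneg.2 (hM k))).trans_eq ?_)
  · simp only [hcentered, Set.mem_ofPred_eq] at hω ⊢
    linarith
  · simp only [hvar, ← sum_add_distrib, mul_add]

/-- Under the CMES sampling setup, the expected welfare of the conditional
multinomial empirical success rule satisfies
`U_{M*} − Σ_k exp(−2·Δ_{M*k}² / Σ_l p_l²·(A_{kl}+A_{M*l}))·Δ_{M*k} ≤ u ≤ U_{M*}`. -/
theorem cmes_expected_welfare_bounds
    {Ω : Type*} [MeasurableSpace Ω] (P : Measure Ω) [IsProbabilityMeasure P]
    (L : ℕ) (hL : 1 ≤ L)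
    (p : Fin L → ℝ) (hp : ∀ l, 0 ≤ p l) (hpsum : ∑ l, p l = 1)
    (m : ℕ) (hm : 1 ≤ m)
    (π : Fin m → Fin L → ℝ) (hπ : ∀ k l, π k l ∈ Set.Icc (0 : ℝ) 1)
    (N : Fin m → Fin 2 → Fin L → ℕ) (hN : ∀ k t l, 1 ≤ N k t l)
    (Y : Fin m → Fin 2 → Fin L → ℕ → Ω → ℝ)
    (hmeas : ∀ k t l i, Measurable (Y k t l i))
    (hrange : ∀ k t l i ω, Y k t l i ω ∈ Set.Icc (0 : ℝ) 1)
    (μ : Fin m → Fin 2 → Fin L → ℝ)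
    (hmean : ∀ k t l i, ∫ ω, Y k t l i ω ∂P = μ k t l)
    (hident : ∀ k t l i j, P.map (Y k t l i) = P.map (Y k t l j))
    (hindep : iIndepFun
      (fun q : Fin m × Fin 2 × Fin L × ℕ => Y q.1 q.2.1 q.2.2.1 q.2.2.2) P)
    (Uhat : Fin m → Ω → ℝ)
    (hUhat : ∀ k ω, Uhat k ω
      = ∑ l, p l *
          ((1 - π k l) * ((N k 0 l : ℝ)⁻¹ * ∑ i ∈ Finset.range (N k 0 l), Y k 0 l i ω)
            + π k l * ((N k 1 l : ℝ)⁻¹ * ∑ i ∈ Finset.range (N k 1 l), Y k 1 l i ω)))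
    (U : Fin m → ℝ)
    (hU : ∀ k, U k = ∑ l, p l * ((1 - π k l) * μ k 0 l + π k l * μ k 1 l))
    (A : Fin m → Fin L → ℝ)
    (hA : ∀ k l, A k l = (1 - π k l) ^ 2 / (N k 0 l : ℝ) + (π k l) ^ 2 / (N k 1 l : ℝ))
    (u : ℝ)
    (hu : u = ∑ k, (P {ω | ∀ j, j ≠ k → Uhat j ω < Uhat k ω}).toReal * U k)
    (hties : ∀ j k, j ≠ k → P {ω | Uhat j ω = Uhat k ω} = 0)
    (M : Fin m) (hM : ∀ k, U k ≤ U M) :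
    U M - ∑ k, Real.exp (-2 * (U M - U k) ^ 2 / ∑ l, (p l) ^ 2 * (A k l + A M l))
        * (U M - U k) ≤ u
      ∧ u ≤ U M :=
  cmes_expected_welfare_bounds_general P L p m π N hN Y hmeas hrange μ hmean hindep Uhat hUhat U hU
    A hA u hu hties M hM
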